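/- The number of roots in the triple root system R(D_{n,5}) equals n² + 33n + 72. -/

import Mathlib

open Finset

/-- Vertices of the triple diagram `D_{n,5}`: the central weight-3 vertex `E₀ = none`,
the chain `E₁,…,E_n` (`Sum.inl i ↦ E_{i+1}`) and the `D₅`-part `F₁,…,F₅`
(`Sum.inr i ↦ F_{i+1}`). -/
abbrev Dn5V (n : ℕ) := Option (Fin n ⊕ Fin 5)

/-- Adjacency of `D_{n,5}`: `E₀—E₁`, `E_i—E_{i+1}`, `E₀—F₁`, the chain
`F₁—F₂—F₃—F₄` and `F₅—F₂` (a `D₅` diagram attached to `E₀` along the long-tail end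
vertex `F₁`; for `n = 0` the underlying diagram is `E₆`). -/
def Dn5Adj (n : ℕ) : Dn5V n → Dn5V n → Bool
  | none, some (Sum.inl i) => decide (i.val = 0)
  | some (Sum.inl i), none => decide (i.val = 0)
  | none, some (Sum.inr i) => decide (i.val = 0)
  | some (Sum.inr i), none => decide (i.val = 0)
  | some (Sum.inl i), some (Sum.inl j) => decide (i.val + 1 = j.val ∨ j.val + 1 = i.val)
  | some (Sum.inr i), some (Sum.inr j) =>
      decide ((i.val + 1 = j.val ∧ j.val ≤ 3) ∨ (j.val + 1 = i.val ∧ i.val ≤ 3) ∨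
        (i.val = 4 ∧ j.val = 1) ∨ (j.val = 4 ∧ i.val = 1))
  | _, _ => false

def Dn5M (n : ℕ) (x y : Dn5V n) : ℤ :=
  if x = y then (if x = none then -3 else -2)
  else if Dn5Adj n x y then 1 else 0

def Dn5Q (n : ℕ) (Y : Dn5V n → ℤ) : ℤ :=
  ∑ x, ∑ y, Y x * Dn5M n x y * Y y


namespace S9


def eN (n : ℕ) (Y : Dn5V n → ℤ) : ℕ → ℤ := fun i => if h : i < n then Y (some (Sum.inl ⟨i, h⟩)) else 0

def av (n : ℕ) (Y : Dn5V n → ℤ) : ℕ → ℤ := fun i => if i = 0 then Y none else eN n Y (i-1)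

def Bf (c f0 f1 f2 f3 f4 : ℤ) : ℤ :=
  2*(c*c+f0*f0+f1*f1+f2*f2+f3*f3+f4*f4) - 2*c*f0 - 2*(f0*f1+f1*f2+f2*f3+f1*f4)

def Af (n : ℕ) (a : ℕ → ℤ) : ℤ := ∑ i ∈ range (n+1), (a i - a (i+1))^2

def mat (i j : ℕ) : ℤ := if i = j then -2 else if i + 1 = j ∨ j + 1 = i then 1 else 0

lemma chain_expand (g : ℕ → ℤ) (n : ℕ) :
    ∑ i ∈ range n, ∑ j ∈ range n, g i * mat i j * g j
      = -2 * ∑ i ∈ range n, g i * g i + 2 * ∑ i ∈ range (n-1), g i * g (i+1) := by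
  induction n with
  | zero => simp
  | succ m ih =>
    rw [Finset.sum_range_succ]
    have hrow : ∑ j ∈ range (m+1), g m * mat m j * g j
        = (∑ j ∈ range m, (if j + 1 = m then g j * g m else 0)) + g m * (-2) * g m := by
      rw [Finset.sum_range_succ]
      congr 1
      · apply Finset.sum_congr rfl
        intro j hj
        have hj' := Finset.mem_range.mp hj
        have : mat m j = if j + 1 = m then 1 else 0 := by
          unfold mat
          have h1 : ¬ (m = j) := by omega
          have h2 : ¬ (m + 1 = j) := by omega
          simp [h1, h2]
        rw [this]
        split <;> ring
      · unfold mat; simp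
    have hcol : ∀ i ∈ range m, ∑ j ∈ range (m+1), g i * mat i j * g j
        = (∑ j ∈ range m, g i * mat i j * g j) + (if i + 1 = m then g i * g m else 0) := by
      intro i hi
      have hi' := Finset.mem_range.mp hi
      rw [Finset.sum_range_succ]
      congr 1
      have : mat i m = if i + 1 = m then 1 else 0 := by
        unfold mat
        have h1 : ¬ (i = m) := by omega
        have h2 : ¬ (m + 1 = i) := by omega
        simp [h1, h2]
      rw [this]
      split <;> ring
    rw [Finset.sum_congr rfl hcol, Finset.sum_add_distrib, ih, hrow]
    have hC : ∑ i ∈ range m, (if i + 1 = m then g i * g m else 0)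
        = ∑ i ∈ range m, g i * g (i+1) - ∑ i ∈ range (m-1), g i * g (i+1) := by
      cases m with
      | zero => simp
      | succ k =>
        have : ∀ i, (if i + 1 = k + 1 then g i * g (k+1) else 0) = (if i = k then g i * g (i+1) else 0) := by
          intro i; by_cases h : i = k <;> simp [h]
        simp only [this]
        rw [Finset.sum_ite_eq' (range (k+1)) k]
        simp [Finset.sum_range_succ]
    rw [hC]
    have : range (m + 1 - 1) = range m := by simp
    rw [this, Finset.sum_range_succ]
    ring

lemma sq_expand (n : ℕ) (a : ℕ → ℤ) :
    ∑ i ∈ range (n+1), (a i - a (i+1))^2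
      = a 0 * a 0 + 2 * (∑ i ∈ range n, a (i+1) * a (i+1)) + a (n+1) * a (n+1)
        - 2 * ∑ i ∈ range (n+1), a i * a (i+1) := by
  induction n with
  | zero => simp; ring
  | succ m ih =>
    rw [Finset.sum_range_succ, ih, Finset.sum_range_succ (fun i => a (i+1) * a (i+1)),
      Finset.sum_range_succ (fun i => a i * a (i+1)) (m+1)]
    ring

lemma Af_expand (n : ℕ) (a : ℕ → ℤ) (h : a (n+1) = 0) :
    Af n a = a 0 * a 0 + 2 * (∑ i ∈ range n, a (i+1) * a (i+1)) - 2 * (a 0 * a 1)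
      - 2 * ∑ i ∈ range (n-1), a (i+1) * a (i+1+1) := by
  unfold Af
  rw [sq_expand, h, Finset.sum_range_succ' (fun i => a i * a (i+1)) n]
  have : ∑ i ∈ range n, a (i+1) * a (i+1+1) = ∑ i ∈ range (n-1), a (i+1) * a (i+1+1) := by
    cases n with
    | zero => simp
    | succ k =>
      rw [Finset.sum_range_succ]
      simp [h]
  rw [this]
  ring

lemma Q_eq (n : ℕ) (Y : Dn5V n → ℤ) :
    Dn5Q n Y = -(Af n (av n Y)
      + Bf (Y none) (Y (some (Sum.inr 0))) (Y (some (Sum.inr 1))) (Y (some (Sum.inr 2)))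
          (Y (some (Sum.inr 3))) (Y (some (Sum.inr 4)))) := by
  have hval : ∀ i : Fin n, Y (some (Sum.inl i)) = eN n Y i.val := by
    intro i; simp [eN]
  -- blocks
  have h0e : ∑ j : Fin n, Y none * Dn5M n none (some (Sum.inl j)) * Y (some (Sum.inl j))
      = Y none * eN n Y 0 := by
    have : ∀ j : Fin n, Y none * Dn5M n none (some (Sum.inl j)) * Y (some (Sum.inl j))
        = (fun m => if m = 0 then Y none * eN n Y m else 0) j.val := by
      intro j
      simp only [Dn5M, Dn5Adj]
      rw [hval j]
      by_cases h : j.val = 0 <;> simp [h]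
    rw [Finset.sum_congr rfl (fun j _ => this j),
      Fin.sum_univ_eq_sum_range (fun m => if m = 0 then Y none * eN n Y m else 0) n]
    rw [Finset.sum_ite_eq' (range n) 0]
    by_cases h : 0 < n
    · simp [h]
    · have hn : n = 0 := by omega
      subst hn
      simp [eN]
  have he0 : ∑ i : Fin n, Y (some (Sum.inl i)) * Dn5M n (some (Sum.inl i)) none * Y none
      = eN n Y 0 * Y none := by
    have : ∀ j : Fin n, Y (some (Sum.inl j)) * Dn5M n (some (Sum.inl j)) none * Y none
        = (fun m => if m = 0 then eN n Y m * Y none else 0) j.val := by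
      intro j
      simp only [Dn5M, Dn5Adj]
      rw [hval j]
      by_cases h : j.val = 0 <;> simp [h]
    rw [Finset.sum_congr rfl (fun j _ => this j),
      Fin.sum_univ_eq_sum_range (fun m => if m = 0 then eN n Y m * Y none else 0) n]
    rw [Finset.sum_ite_eq' (range n) 0]
    by_cases h : 0 < n
    · simp [h]
    · have hn : n = 0 := by omega
      subst hn
      simp [eN]
  have hee : ∑ i : Fin n, ∑ j : Fin n,
      Y (some (Sum.inl i)) * Dn5M n (some (Sum.inl i)) (some (Sum.inl j)) * Y (some (Sum.inl j))
      = -2 * ∑ i ∈ range n, eN n Y i * eN n Y i + 2 * ∑ i ∈ range (n-1), eN n Y i * eN n Y (i+1) := by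
    rw [← chain_expand (eN n Y) n]
    rw [← Fin.sum_univ_eq_sum_range (fun i => ∑ j ∈ range n, eN n Y i * mat i j * eN n Y j) n]
    apply Finset.sum_congr rfl
    intro i _
    rw [← Fin.sum_univ_eq_sum_range (fun j => eN n Y i.val * mat i.val j * eN n Y j) n]
    apply Finset.sum_congr rfl
    intro j _
    rw [hval i, hval j]
    simp only [Dn5M, Dn5Adj, mat]
    by_cases h : i = j
    · subst h; simp
    · have : i.val ≠ j.val := fun hc => h (Fin.val_inj.mp hc)
      simp [h, this]
  have h00 : Y none * Dn5M n none none * Y none = Y none * (-3) * Y none := by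
    simp [Dn5M]
  have h0f : ∑ j : Fin 5, Y none * Dn5M n none (some (Sum.inr j)) * Y (some (Sum.inr j))
      = Y none * Y (some (Sum.inr 0)) := by
    simp [Fin.sum_univ_five, Dn5M, Dn5Adj, show ((0:Fin 5):ℕ) = 0 from rfl, show ((1:Fin 5):ℕ) = 1 from rfl, show ((2:Fin 5):ℕ) = 2 from rfl, show ((3:Fin 5):ℕ) = 3 from rfl, show ((4:Fin 5):ℕ) = 4 from rfl]
  have hf0 : ∑ j : Fin 5, Y (some (Sum.inr j)) * Dn5M n (some (Sum.inr j)) none * Y none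
      = Y (some (Sum.inr 0)) * Y none := by
    simp [Fin.sum_univ_five, Dn5M, Dn5Adj, show ((0:Fin 5):ℕ) = 0 from rfl, show ((1:Fin 5):ℕ) = 1 from rfl, show ((2:Fin 5):ℕ) = 2 from rfl, show ((3:Fin 5):ℕ) = 3 from rfl, show ((4:Fin 5):ℕ) = 4 from rfl]
  have hef : ∑ i : Fin n, ∑ j : Fin 5,
      Y (some (Sum.inl i)) * Dn5M n (some (Sum.inl i)) (some (Sum.inr j)) * Y (some (Sum.inr j)) = 0 := by
    simp [Dn5M, Dn5Adj]
  have hfe : ∑ j : Fin 5, ∑ i : Fin n,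
      Y (some (Sum.inr j)) * Dn5M n (some (Sum.inr j)) (some (Sum.inl i)) * Y (some (Sum.inl i)) = 0 := by
    simp [Dn5M, Dn5Adj]
  have hff : ∑ i : Fin 5, ∑ j : Fin 5,
      Y (some (Sum.inr i)) * Dn5M n (some (Sum.inr i)) (some (Sum.inr j)) * Y (some (Sum.inr j))
      = -2*(Y (some (Sum.inr 0)) * Y (some (Sum.inr 0)) + Y (some (Sum.inr 1)) * Y (some (Sum.inr 1))
          + Y (some (Sum.inr 2)) * Y (some (Sum.inr 2)) + Y (some (Sum.inr 3)) * Y (some (Sum.inr 3))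
          + Y (some (Sum.inr 4)) * Y (some (Sum.inr 4)))
        + 2*(Y (some (Sum.inr 0)) * Y (some (Sum.inr 1)) + Y (some (Sum.inr 1)) * Y (some (Sum.inr 2))
          + Y (some (Sum.inr 2)) * Y (some (Sum.inr 3)) + Y (some (Sum.inr 1)) * Y (some (Sum.inr 4))) := by
    simp [Fin.sum_univ_five, Dn5M, Dn5Adj, show ((0:Fin 5):ℕ) = 0 from rfl, show ((1:Fin 5):ℕ) = 1 from rfl, show ((2:Fin 5):ℕ) = 2 from rfl, show ((3:Fin 5):ℕ) = 3 from rfl, show ((4:Fin 5):ℕ) = 4 from rfl]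
    ring
  have hav1 : ∀ i, av n Y (i+1) = eN n Y i := by
    intro i; simp [av]
  have hav0 : av n Y 0 = Y none := by simp [av]
  have havone : av n Y 1 = eN n Y 0 := by simp [av]
  have hend : av n Y (n+1) = 0 := by simp [av, eN]
  have hAf := Af_expand n (av n Y) hend
  simp only [hav1, hav0, havone] at hAf
  simp only [Dn5Q, Fintype.sum_option, Fintype.sum_sum_type, Finset.sum_add_distrib]
  rw [h00, h0e, h0f, he0, hee, hef, hf0, hfe, hff, hAf]
  unfold Bf
  ring



lemma tail_sum (a : ℕ → ℤ) : ∀ m i, i ≤ m → a i = a m + ∑ j ∈ Finset.Ico i m, (a j - a (j+1)) := by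
  intro m
  induction m with
  | zero => intro i hi; interval_cases i; simp
  | succ m ih =>
    intro i hi
    rcases Nat.eq_or_lt_of_le hi with h | h
    · subst h; simp
    · have hi' : i ≤ m := by omega
      rw [Finset.sum_Ico_succ_top hi', ih i hi']
      ring

lemma sq_le_two (s : ℤ) (h : s^2 ≤ 2) : s = -1 ∨ s = 0 ∨ s = 1 := by
  have h1 : 4*s ≤ 6 := by nlinarith [sq_nonneg (s-2)]
  have h2 : -6 ≤ 4*s := by nlinarith [sq_nonneg (s+2)]
  omega

lemma ico_ite_sum (n : ℕ) (c : ℤ) (k : ℕ) (hk : k ≤ n) (i : ℕ) :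
    (∑ j ∈ Finset.Ico i (n+1), if j = k then c else 0) = if i ≤ k then c else 0 := by
  rw [Finset.sum_ite_eq' (Finset.Ico i (n+1)) k]
  simp only [Finset.mem_Ico, Nat.lt_succ_iff]
  by_cases h : i ≤ k <;> simp [h, hk]

lemma chain_prefix (n : ℕ) (a : ℕ → ℤ) (hnn : ∀ i, 0 ≤ a i) (hend : a (n+1) = 0)
    (h0 : a 0 = 1) (hA : ∑ i ∈ range (n+1), (a i - a (i+1))^2 = 1) :
    ∃ k ≤ n, ∀ i ≤ n+1, a i = if i ≤ k then 1 else 0 := by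
  set s : ℕ → ℤ := fun i => a i - a (i+1) with hs
  have hsum : ∑ i ∈ range (n+1), s i = 1 := by
    rw [Finset.sum_range_sub' a (n+1), h0, hend]; ring
  have h01 : ∀ i ∈ range (n+1), s i = 0 ∨ s i = 1 := by
    have hzero : ∑ i ∈ range (n+1), (s i ^ 2 - s i) = 0 := by
      rw [Finset.sum_sub_distrib, hA, hsum]; ring
    have hnncoef : ∀ i ∈ range (n+1), 0 ≤ s i ^ 2 - s i := by
      intro i _
      have : s i * (s i - 1) = s i ^ 2 - s i := by ring
      rcases le_or_gt (s i) 0 with h | h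
      · nlinarith
      · nlinarith
    intro i hi
    have := (Finset.sum_eq_zero_iff_of_nonneg hnncoef).mp hzero i hi
    have h2 : s i * (s i - 1) = 0 := by linarith [this]
    rcases mul_eq_zero.mp h2 with h | h
    · left; exact h
    · right; linarith
  set T := (range (n+1)).filter (fun i => s i ≠ 0) with hT
  have hTsum : ∑ i ∈ T, s i = 1 := by
    rw [hT, Finset.sum_filter_ne_zero]; exact hsum
  have hTone : ∀ i ∈ T, s i = 1 := by
    intro i hi
    rcases Finset.mem_filter.mp hi with ⟨hir, hine⟩
    rcases h01 i hir with h | h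
    · exact absurd h hine
    · exact h
  have hcard : T.card = 1 := by
    have : ∑ i ∈ T, s i = T.card • (1:ℤ) := Finset.sum_congr rfl hTone ▸ Finset.sum_const 1
    rw [hTsum] at this
    simp at this
    omega
  obtain ⟨k, hk⟩ := Finset.card_eq_one.mp hcard
  have hkr : k ∈ range (n+1) := by
    have : k ∈ T := hk ▸ Finset.mem_singleton_self k
    exact Finset.mem_filter.mp this |>.1
  have hkn : k ≤ n := by have := Finset.mem_range.mp hkr; omega
  have hsk : s k = 1 := hTone k (hk ▸ Finset.mem_singleton_self k)
  have hsval : ∀ j ∈ range (n+1), s j = if j = k then 1 else 0 := by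
    intro j hj
    by_cases h : j = k
    · subst h; simp [hsk]
    · simp only [h, if_false]
      by_contra hne
      have : j ∈ T := Finset.mem_filter.mpr ⟨hj, hne⟩
      rw [hk] at this
      exact h (Finset.mem_singleton.mp this)
  refine ⟨k, hkn, fun i hi => ?_⟩
  rw [tail_sum a (n+1) i hi, hend]
  rw [Finset.sum_congr rfl (fun j hj => hsval j (by
    rcases Finset.mem_Ico.mp hj with ⟨_, h2⟩
    exact Finset.mem_range.mpr h2))]
  rw [ico_ite_sum n 1 k hkn i]
  ring

lemma chain_seg (n : ℕ) (a : ℕ → ℤ) (hnn : ∀ i, 0 ≤ a i) (hend : a (n+1) = 0)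
    (h0 : a 0 = 0) (hA : ∑ i ∈ range (n+1), (a i - a (i+1))^2 = 2) :
    ∃ q p, q < p ∧ p ≤ n ∧ ∀ i ≤ n+1, a i = if q < i ∧ i ≤ p then 1 else 0 := by
  set s : ℕ → ℤ := fun i => a i - a (i+1) with hs
  have hsum : ∑ i ∈ range (n+1), s i = 0 := by
    rw [Finset.sum_range_sub' a (n+1), h0, hend]; ring
  have hbnd : ∀ i ∈ range (n+1), s i = -1 ∨ s i = 0 ∨ s i = 1 := by
    intro i hi
    apply sq_le_two
    calc s i ^ 2 ≤ ∑ j ∈ range (n+1), s j ^ 2 :=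
          Finset.single_le_sum (fun j _ => sq_nonneg (s j)) hi
      _ = 2 := hA
  set T := (range (n+1)).filter (fun i => s i ≠ 0) with hT
  have hTsum : ∑ i ∈ T, s i = 0 := by
    rw [hT, Finset.sum_filter_ne_zero]; exact hsum
  have hTsq : ∀ i ∈ T, s i ^ 2 = 1 := by
    intro i hi
    rcases Finset.mem_filter.mp hi with ⟨hir, hine⟩
    rcases hbnd i hir with h | h | h <;> simp [h] at hine ⊢
  have hcard : T.card = 2 := by
    have h1 : ∑ i ∈ T, s i ^ 2 = 2 := by
      rw [hT, Finset.sum_filter_of_ne]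
      · exact hA
      · intro x _ hx
        intro hc
        apply hx
        rw [hc]; ring
    have h2 : ∑ i ∈ T, s i ^ 2 = T.card • (1:ℤ) := Finset.sum_congr rfl hTsq ▸ Finset.sum_const 1
    rw [h1] at h2
    simp at h2
    omega
  obtain ⟨x, y, hxy, hxyT⟩ := Finset.card_eq_two.mp hcard
  -- wlog q < p
  obtain ⟨q, p, hqp, hTqp⟩ : ∃ q p, q < p ∧ T = {q, p} := by
    rcases lt_or_gt_of_ne hxy with h | h
    · exact ⟨x, y, h, hxyT⟩
    · exact ⟨y, x, h, by rw [hxyT, Finset.pair_comm]⟩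
  have hqT : q ∈ T := hTqp ▸ Finset.mem_insert_self q {p}
  have hpT : p ∈ T := hTqp ▸ (Finset.mem_insert.mpr (Or.inr (Finset.mem_singleton_self p)))
  have hqr : q ≤ n := by have := Finset.mem_range.mp (Finset.mem_filter.mp hqT).1; omega
  have hpr : p ≤ n := by have := Finset.mem_range.mp (Finset.mem_filter.mp hpT).1; omega
  have hqne : s q ≠ 0 := (Finset.mem_filter.mp hqT).2
  have hpne : s p ≠ 0 := (Finset.mem_filter.mp hpT).2
  have hsum2 : s q + s p = 0 := by
    have := Finset.sum_pair (show q ≠ p by omega) (f := s)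
    rw [← hTqp, hTsum] at this
    linarith [this]
  have hsval : ∀ j ∈ range (n+1), s j = (if j = q then s q else 0) + (if j = p then s p else 0) := by
    intro j hj
    by_cases h1 : j = q
    · subst h1; simp [show j ≠ p by omega]
    · by_cases h2 : j = p
      · subst h2; simp [h1]
      · simp only [h1, h2, if_false, add_zero]
        by_contra hne
        have : j ∈ T := Finset.mem_filter.mpr ⟨hj, hne⟩
        rw [hTqp] at this
        rcases Finset.mem_insert.mp this with h | h
        · exact h1 h
        · exact h2 (Finset.mem_singleton.mp h)
  have hval : ∀ i ≤ n+1, a i = (if i ≤ q then s q else 0) + (if i ≤ p then s p else 0) := by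
    intro i hi
    rw [tail_sum a (n+1) i hi, hend]
    rw [Finset.sum_congr rfl (fun j hj => hsval j (by
      rcases Finset.mem_Ico.mp hj with ⟨_, h2⟩
      exact Finset.mem_range.mpr h2))]
    rw [Finset.sum_add_distrib, ico_ite_sum n (s q) q hqr i, ico_ite_sum n (s p) p hpr i]
    ring
  have hsp : s p = 1 := by
    have h1 := hval (q+1) (by omega)
    have h2 := hnn (q+1)
    rw [h1] at h2
    simp only [show ¬ (q+1 ≤ q) by omega, if_false, show q+1 ≤ p by omega, if_true, zero_add] at h2
    rcases hbnd p (Finset.mem_range.mpr (by omega)) with h | h | h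
    · omega
    · exact absurd h hpne
    · exact h
  have hsq2 : s q = -1 := by omega
  refine ⟨q, p, hqp, hpr, fun i hi => ?_⟩
  rw [hval i hi, hsp, hsq2]
  by_cases h1 : i ≤ q
  · simp [h1, show i ≤ p by omega, show ¬(q < i) by omega]
  · by_cases h2 : i ≤ p
    · simp [h1, h2, show q < i by omega]
    · simp [h1, h2]

lemma chain_zero (n : ℕ) (a : ℕ → ℤ) (hend : a (n+1) = 0)
    (hA : ∑ i ∈ range (n+1), (a i - a (i+1))^2 = 0) :
    ∀ i ≤ n+1, a i = 0 := by
  have hz : ∀ i ∈ range (n+1), (a i - a (i+1))^2 = 0 :=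
    (Finset.sum_eq_zero_iff_of_nonneg (fun i _ => sq_nonneg _)).mp hA
  intro i hi
  rw [tail_sum a (n+1) i hi, hend]
  rw [Finset.sum_congr rfl (fun j hj => by
    have hjr : j ∈ range (n+1) := by
      rcases Finset.mem_Ico.mp hj with ⟨_, h2⟩
      exact Finset.mem_range.mpr h2
    have := hz j hjr
    have : a j - a (j+1) = 0 := by
      have := sq_eq_zero_iff.mp this
      exact this
    exact this)]
  simp




def LT36 : List (ℤ × ℤ × ℤ × ℤ × ℤ × ℤ) := [(0, 0, 0, 0, 0, 1), (0, 0, 0, 0, 1, 0), (0, 0, 0, 1, 0, 0), (0, 0, 0, 1, 1, 0), (0, 0, 1, 0, 0, 0), (0, 0, 1, 0, 0, 1), (0, 0, 1, 1, 0, 0), (0, 0, 1, 1, 0, 1), (0, 0, 1, 1, 1, 0), (0, 0, 1, 1, 1, 1), (0, 1, 0, 0, 0, 0), (0, 1, 1, 0, 0, 0), (0, 1, 1, 0, 0, 1), (0, 1, 1, 1, 0, 0), (0, 1, 1, 1, 0, 1), (0, 1, 1, 1, 1, 0), (0, 1, 1, 1, 1, 1), (0, 1, 2, 1, 0, 1),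 (0, 1, 2, 1, 1, 1), (0, 1, 2, 2, 1, 1), (1, 0, 0, 0, 0, 0), (1, 1, 0, 0, 0, 0), (1, 1, 1, 0, 0, 0), (1, 1, 1, 0, 0, 1), (1, 1, 1, 1, 0, 0), (1, 1, 1, 1, 0, 1), (1, 1, 1, 1, 1, 0), (1, 1, 1, 1, 1, 1), (1, 1, 2, 1, 0, 1), (1, 1, 2, 1, 1, 1), (1, 1, 2, 2, 1, 1), (1, 2, 2, 1, 0, 1), (1, 2, 2, 1, 1, 1), (1, 2, 2, 2, 1, 1), (1, 2, 3, 2, 1, 1), (1, 2, 3, 2, 1, 2)]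

def LT20 : List (ℤ × ℤ × ℤ × ℤ × ℤ) := [(0, 0, 0, 0, 1), (0, 0, 0, 1, 0), (0, 0, 1, 0, 0), (0, 0, 1, 1, 0), (0, 1, 0, 0, 0), (0, 1, 0, 0, 1), (0, 1, 1, 0, 0), (0, 1, 1, 0, 1), (0, 1, 1, 1, 0), (0, 1, 1, 1, 1), (1, 0, 0, 0, 0), (1, 1, 0, 0, 0), (1, 1, 0, 0, 1), (1, 1, 1, 0, 0), (1, 1, 1, 0, 1), (1, 1, 1, 1, 0), (1, 1, 1, 1, 1), (1, 2, 1, 0, 1), (1, 2, 1, 1, 1), (1, 2, 2, 1, 1)]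

def LT16 : List (ℤ × ℤ × ℤ × ℤ × ℤ) := [(0, 0, 0, 0, 0), (1, 0, 0, 0, 0), (1, 1, 0, 0, 0), (1, 1, 0, 0, 1), (1, 1, 1, 0, 0), (1, 1, 1, 0, 1), (1, 1, 1, 1, 0), (1, 1, 1, 1, 1), (1, 2, 1, 0, 1), (1, 2, 1, 1, 1), (1, 2, 2, 1, 1), (2, 2, 1, 0, 1), (2, 2, 1, 1, 1), (2, 2, 2, 1, 1), (2, 3, 2, 1, 1), (2, 3, 2, 1, 2)]

lemma Bf_sos (c f0 f1 f2 f3 f4 : ℤ) :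
    60 * Bf c f0 f1 f2 f3 f4
      = 30*(2*c-f0)^2 + 10*(3*f0-2*f1)^2 + 5*(4*f1-3*f2-3*f4)^2
        + 3*(5*f2-4*f3-3*f4)^2 + 18*(2*f3-f4)^2 + 30*f4^2 := by
  unfold Bf; ring

lemma Bf_nonneg (c f0 f1 f2 f3 f4 : ℤ) : 0 ≤ Bf c f0 f1 f2 f3 f4 := by
  nlinarith [Bf_sos c f0 f1 f2 f3 f4, sq_nonneg (2*c-f0), sq_nonneg (3*f0-2*f1),
    sq_nonneg (4*f1-3*f2-3*f4), sq_nonneg (5*f2-4*f3-3*f4), sq_nonneg (2*f3-f4), sq_nonneg f4]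

lemma Bf_even (c f0 f1 f2 f3 f4 : ℤ) : Even (Bf c f0 f1 f2 f3 f4) :=
  ⟨(c*c+f0*f0+f1*f1+f2*f2+f3*f3+f4*f4) - c*f0 - (f0*f1+f1*f2+f2*f3+f1*f4), by unfold Bf; ring⟩

lemma Bf_zero (c f0 f1 f2 f3 f4 : ℤ) (h : Bf c f0 f1 f2 f3 f4 = 0) :
    c = 0 ∧ f0 = 0 ∧ f1 = 0 ∧ f2 = 0 ∧ f3 = 0 ∧ f4 = 0 := by
  have hs := Bf_sos c f0 f1 f2 f3 f4
  rw [h] at hs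
  have h1 : (2*c-f0)^2 = 0 := by
    nlinarith [sq_nonneg (3*f0-2*f1), sq_nonneg (4*f1-3*f2-3*f4), sq_nonneg (5*f2-4*f3-3*f4),
      sq_nonneg (2*f3-f4), sq_nonneg f4, sq_nonneg (2*c-f0)]
  have h2 : (3*f0-2*f1)^2 = 0 := by
    nlinarith [sq_nonneg (2*c-f0), sq_nonneg (4*f1-3*f2-3*f4), sq_nonneg (5*f2-4*f3-3*f4),
      sq_nonneg (2*f3-f4), sq_nonneg f4, sq_nonneg (3*f0-2*f1)]
  have h3 : (4*f1-3*f2-3*f4)^2 = 0 := by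
    nlinarith [sq_nonneg (2*c-f0), sq_nonneg (3*f0-2*f1), sq_nonneg (5*f2-4*f3-3*f4),
      sq_nonneg (2*f3-f4), sq_nonneg f4, sq_nonneg (4*f1-3*f2-3*f4)]
  have h4 : (5*f2-4*f3-3*f4)^2 = 0 := by
    nlinarith [sq_nonneg (2*c-f0), sq_nonneg (3*f0-2*f1), sq_nonneg (4*f1-3*f2-3*f4),
      sq_nonneg (2*f3-f4), sq_nonneg f4, sq_nonneg (5*f2-4*f3-3*f4)]
  have h5 : (2*f3-f4)^2 = 0 := by
    nlinarith [sq_nonneg (2*c-f0), sq_nonneg (3*f0-2*f1), sq_nonneg (4*f1-3*f2-3*f4),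
      sq_nonneg (5*f2-4*f3-3*f4), sq_nonneg f4, sq_nonneg (2*f3-f4)]
  have h6 : f4^2 = 0 := by
    nlinarith [sq_nonneg (2*c-f0), sq_nonneg (3*f0-2*f1), sq_nonneg (4*f1-3*f2-3*f4),
      sq_nonneg (5*f2-4*f3-3*f4), sq_nonneg (2*f3-f4), sq_nonneg f4]
  have e1 := sq_eq_zero_iff.mp h1
  have e2 := sq_eq_zero_iff.mp h2
  have e3 := sq_eq_zero_iff.mp h3
  have e4 := sq_eq_zero_iff.mp h4
  have e5 := sq_eq_zero_iff.mp h5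
  have e6 := sq_eq_zero_iff.mp h6
  omega

lemma key36 : ∀ c ∈ range 4, ∀ f0 ∈ range 5, ∀ f1 ∈ range 6, ∀ f2 ∈ range 5,
    ∀ f3 ∈ range 3, ∀ f4 ∈ range 3,
    Bf (c:ℤ) (f0:ℤ) (f1:ℤ) (f2:ℤ) (f3:ℤ) (f4:ℤ) = 2 →
      ((c:ℤ), (f0:ℤ), (f1:ℤ), (f2:ℤ), (f3:ℤ), (f4:ℤ)) ∈ LT36 := by decide

lemma Bf_two (c f0 f1 f2 f3 f4 : ℤ) (hc : 0 ≤ c) (h0 : 0 ≤ f0) (h1 : 0 ≤ f1) (h2 : 0 ≤ f2)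
    (h3 : 0 ≤ f3) (h4 : 0 ≤ f4) (hB : Bf c f0 f1 f2 f3 f4 = 2) :
    (c, f0, f1, f2, f3, f4) ∈ LT36 := by
  have hs := Bf_sos c f0 f1 f2 f3 f4
  rw [hB] at hs
  have b4 : f4 ≤ 2 := by
    nlinarith [sq_nonneg (2*c-f0), sq_nonneg (3*f0-2*f1), sq_nonneg (4*f1-3*f2-3*f4),
      sq_nonneg (5*f2-4*f3-3*f4), sq_nonneg (2*f3-f4), sq_nonneg (f4-3)]
  have b3 : f3 ≤ 2 := by
    nlinarith [sq_nonneg (2*c-f0), sq_nonneg (3*f0-2*f1), sq_nonneg (4*f1-3*f2-3*f4),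
      sq_nonneg (5*f2-4*f3-3*f4), sq_nonneg f4, sq_nonneg (2*f3-f4-3)]
  have b2 : f2 ≤ 4 := by
    nlinarith [sq_nonneg (2*c-f0), sq_nonneg (3*f0-2*f1), sq_nonneg (4*f1-3*f2-3*f4),
      sq_nonneg (2*f3-f4), sq_nonneg f4, sq_nonneg (5*f2-4*f3-3*f4-7)]
  have b1 : f1 ≤ 5 := by
    nlinarith [sq_nonneg (2*c-f0), sq_nonneg (3*f0-2*f1), sq_nonneg (5*f2-4*f3-3*f4),
      sq_nonneg (2*f3-f4), sq_nonneg f4, sq_nonneg (4*f1-3*f2-3*f4-5)]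
  have b0 : f0 ≤ 4 := by
    nlinarith [sq_nonneg (2*c-f0), sq_nonneg (4*f1-3*f2-3*f4), sq_nonneg (5*f2-4*f3-3*f4),
      sq_nonneg (2*f3-f4), sq_nonneg f4, sq_nonneg (3*f0-2*f1-4)]
  have bc : c ≤ 3 := by
    nlinarith [sq_nonneg (3*f0-2*f1), sq_nonneg (4*f1-3*f2-3*f4), sq_nonneg (5*f2-4*f3-3*f4),
      sq_nonneg (2*f3-f4), sq_nonneg f4, sq_nonneg (2*c-f0-3)]
  have := key36 c.toNat (by simp [Finset.mem_range]; omega) f0.toNat (by simp [Finset.mem_range]; omega)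
    f1.toNat (by simp [Finset.mem_range]; omega) f2.toNat (by simp [Finset.mem_range]; omega)
    f3.toNat (by simp [Finset.mem_range]; omega) f4.toNat (by simp [Finset.mem_range]; omega)
  rw [Int.toNat_of_nonneg hc, Int.toNat_of_nonneg h0, Int.toNat_of_nonneg h1,
    Int.toNat_of_nonneg h2, Int.toNat_of_nonneg h3, Int.toNat_of_nonneg h4] at this
  exact this hB

lemma LT36_split : ∀ t ∈ LT36, (t.1 = 0 ∧ t.2 ∈ LT20) ∨ (t.1 = 1 ∧ t.2 ∈ LT16) := by decide

lemma LT20_val : ∀ t ∈ LT20, Bf 0 t.1 t.2.1 t.2.2.1 t.2.2.2.1 t.2.2.2.2 = 2 := by decide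

lemma LT16_val : ∀ t ∈ LT16, Bf 1 t.1 t.2.1 t.2.2.1 t.2.2.2.1 t.2.2.2.2 = 2 := by decide


end S9

namespace S9

def tup5 (t : ℤ×ℤ×ℤ×ℤ×ℤ) (j : Fin 5) : ℤ :=
  if j.val = 0 then t.1 else if j.val = 1 then t.2.1 else if j.val = 2 then t.2.2.1
  else if j.val = 3 then t.2.2.2.1 else t.2.2.2.2

def segY (n q r : ℕ) : Dn5V n → ℤ
  | some (Sum.inl i) => if q ≤ i.val ∧ i.val ≤ r then 1 else 0
  | _ => 0

def fYv (n : ℕ) (t : ℤ×ℤ×ℤ×ℤ×ℤ) : Dn5V n → ℤ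
  | some (Sum.inr j) => tup5 t j
  | _ => 0

def coreY (n k : ℕ) (t : ℤ×ℤ×ℤ×ℤ×ℤ) : Dn5V n → ℤ
  | none => 1
  | some (Sum.inl i) => if i.val < k then 1 else 0
  | some (Sum.inr j) => tup5 t j

lemma Q_zero (n : ℕ) : Dn5Q n (0 : Dn5V n → ℤ) = 0 := by
  simp [Dn5Q]

lemma ite_sq_split (x q r : ℕ) (hqr : q ≤ r) :
    ((if q+1 ≤ x ∧ x ≤ r+1 then (1:ℤ) else 0) - (if q+1 ≤ x+1 ∧ x+1 ≤ r+1 then 1 else 0))^2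
      = (if x = q then 1 else 0) + (if x = r+1 then 1 else 0) := by
  split_ifs <;> first | (exfalso; omega) | norm_num

lemma segY_Q (n q r : ℕ) (hqr : q ≤ r) (hr : r < n) : Dn5Q n (segY n q r) = -2 := by
  rw [Q_eq]
  have hav : av n (segY n q r) = fun i => if q+1 ≤ i ∧ i ≤ r+1 then (1:ℤ) else 0 := by
    funext i
    cases i with
    | zero => simp [av, segY]
    | succ m =>
      simp only [av, eN, Nat.succ_ne_zero, if_false, Nat.add_sub_cancel]
      by_cases h : m < n
      · simp only [dif_pos h, segY]
        congr 1
        simp only [eq_iff_iff]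
        omega
      · rw [dif_neg h]
        have h2 : ¬ (q ≤ m ∧ m ≤ r) := by omega
        have h3 : ¬ (q+1 ≤ m+1 ∧ m+1 ≤ r+1) := by omega
        simp [h2, h3]
  have hAf : Af n (av n (segY n q r)) = 2 := by
    rw [hav]
    unfold Af
    simp only [ite_sq_split _ q r hqr]
    rw [Finset.sum_add_distrib, Finset.sum_ite_eq' (range (n+1)) q,
      Finset.sum_ite_eq' (range (n+1)) (r+1)]
    have h1 : q ∈ range (n+1) := Finset.mem_range.mpr (by omega)
    have h2 : r+1 ∈ range (n+1) := Finset.mem_range.mpr (by omega)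
    simp [h1, h2]
  rw [hAf]
  have : ∀ j : Fin 5, segY n q r (some (Sum.inr j)) = 0 := fun j => rfl
  rw [show segY n q r none = 0 from rfl, this 0, this 1, this 2, this 3, this 4]
  norm_num [Bf]

lemma fYv_Q (n : ℕ) (t : ℤ×ℤ×ℤ×ℤ×ℤ) (ht : t ∈ LT20) : Dn5Q n (fYv n t) = -2 := by
  rw [Q_eq]
  have hav : av n (fYv n t) = fun _ => (0:ℤ) := by
    funext i
    cases i with
    | zero => rfl
    | succ m =>
      simp only [av, eN, Nat.succ_ne_zero, if_false, Nat.add_sub_cancel]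
      by_cases h : m < n
      · rw [dif_pos h]; rfl
      · rw [dif_neg h]
  have hAf : Af n (av n (fYv n t)) = 0 := by
    rw [hav]; unfold Af; simp
  rw [hAf]
  have h0 : fYv n t none = 0 := rfl
  have hj : ∀ j : Fin 5, fYv n t (some (Sum.inr j)) = tup5 t j := fun j => rfl
  rw [h0, hj 0, hj 1, hj 2, hj 3, hj 4]
  have ht5 : tup5 t 0 = t.1 ∧ tup5 t 1 = t.2.1 ∧ tup5 t 2 = t.2.2.1 ∧ tup5 t 3 = t.2.2.2.1
      ∧ tup5 t 4 = t.2.2.2.2 := by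
    refine ⟨rfl, rfl, rfl, rfl, rfl⟩
  rw [ht5.1, ht5.2.1, ht5.2.2.1, ht5.2.2.2.1, ht5.2.2.2.2]
  rw [LT20_val t ht]
  norm_num

lemma coreY_Q (n k : ℕ) (hk : k ≤ n) (t : ℤ×ℤ×ℤ×ℤ×ℤ) (ht : t ∈ LT16) :
    Dn5Q n (coreY n k t) = -3 := by
  rw [Q_eq]
  have hav : av n (coreY n k t) = fun i => if i ≤ k then (1:ℤ) else 0 := by
    funext i
    cases i with
    | zero => simp [av, coreY]
    | succ m =>
      simp only [av, eN, Nat.succ_ne_zero, if_false, Nat.add_sub_cancel]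
      by_cases h : m < n
      · simp only [dif_pos h, coreY]
        congr 1
      · rw [dif_neg h]
        have : ¬ (m+1 ≤ k) := by omega
        simp [this]
  have hAf : Af n (av n (coreY n k t)) = 1 := by
    rw [hav]
    unfold Af
    have hsq : ∀ x : ℕ, ((if x ≤ k then (1:ℤ) else 0) - (if x+1 ≤ k then 1 else 0))^2
        = if x = k then 1 else 0 := by
      intro x
      split_ifs <;> first | (exfalso; omega) | norm_num
    simp only [hsq]
    rw [Finset.sum_ite_eq' (range (n+1)) k]
    simp [Finset.mem_range.mpr (show k < n+1 by omega)]
  rw [hAf]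
  have h0 : coreY n k t none = 1 := rfl
  have hj : ∀ j : Fin 5, coreY n k t (some (Sum.inr j)) = tup5 t j := fun j => rfl
  rw [h0, hj 0, hj 1, hj 2, hj 3, hj 4]
  rw [show tup5 t 0 = t.1 from rfl, show tup5 t 1 = t.2.1 from rfl,
    show tup5 t 2 = t.2.2.1 from rfl, show tup5 t 3 = t.2.2.2.1 from rfl,
    show tup5 t 4 = t.2.2.2.2 from rfl]
  rw [LT16_val t ht]
  norm_num

lemma classify (n : ℕ) (Y : Dn5V n → ℤ) (hnn : ∀ i, 0 ≤ Y i)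
    (hQ : Dn5Q n Y = -2 ∨ Dn5Q n Y = -3) :
    (∃ q r, q ≤ r ∧ r < n ∧ Y = segY n q r) ∨ (∃ t ∈ LT20, Y = fYv n t)
      ∨ (∃ k ≤ n, ∃ t ∈ LT16, Y = coreY n k t) := by
  have hq := Q_eq n Y
  set c := Y none with hc
  set f0 := Y (some (Sum.inr 0))
  set f1 := Y (some (Sum.inr 1))
  set f2 := Y (some (Sum.inr 2))
  set f3 := Y (some (Sum.inr 3))
  set f4 := Y (some (Sum.inr 4))
  set a := av n Y with ha
  have hsum : Af n a + Bf c f0 f1 f2 f3 f4 = 2 ∨ Af n a + Bf c f0 f1 f2 f3 f4 = 3 := by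
    rcases hQ with h | h <;> rw [hq] at h <;> omega
  have hBnn := Bf_nonneg c f0 f1 f2 f3 f4
  have hAnn : 0 ≤ Af n a := Finset.sum_nonneg (fun i _ => sq_nonneg _)
  obtain ⟨m, hm⟩ := Bf_even c f0 f1 f2 f3 f4
  have hann : ∀ i, 0 ≤ a i := by
    intro i
    cases i with
    | zero => exact hnn none
    | succ k =>
      simp only [ha, av, eN, Nat.succ_ne_zero, if_false, Nat.add_sub_cancel]
      by_cases h : k < n
      · rw [dif_pos h]; exact hnn _
      · rw [dif_neg h]
  have hend : a (n+1) = 0 := by simp [ha, av, eN]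
  have ha0 : a 0 = c := by simp [ha, av, hc]
  have hpar : Even (Af n a - a 0) := by
    have h1 : Af n a - a 0 = ∑ i ∈ range (n+1), ((a i - a (i+1))^2 - (a i - a (i+1))) := by
      rw [Finset.sum_sub_distrib, Finset.sum_range_sub' a (n+1), hend]
      unfold Af
      ring
    rw [h1]
    apply Finset.even_sum
    intro i _
    have : (a i - a (i+1))^2 - (a i - a (i+1)) = (a i - a (i+1)) * ((a i - a (i+1)) - 1) := by ring
    rw [this]
    rcases Int.even_or_odd (a i - a (i+1)) with h | h
    · exact h.mul_right _
    · have : Even ((a i - a (i+1)) - 1) := by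
        rcases h with ⟨w, hw⟩
        exact ⟨w, by omega⟩
      exact this.mul_left _
  have hB02 : Bf c f0 f1 f2 f3 f4 = 0 ∨ Bf c f0 f1 f2 f3 f4 = 2 := by omega
  rcases hB02 with hB | hB
  · -- B = 0 : segment case
    obtain ⟨hc0, h0, h1, h2, h3, h4⟩ := Bf_zero c f0 f1 f2 f3 f4 hB
    have hAf2 : Af n a = 2 := by
      have hA23 : Af n a = 2 ∨ Af n a = 3 := by omega
      rcases hA23 with h | h
      · exact h
      · exfalso
        rw [h, ha0, hc0] at hpar
        obtain ⟨w, hw⟩ := hpar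
        omega
    obtain ⟨q, p, hqp, hpn, hshape⟩ := chain_seg n a hann hend (ha0.trans hc0) hAf2
    left
    refine ⟨q, p - 1, by omega, by omega, ?_⟩
    funext x
    cases x with
    | none => rw [← hc, hc0]; rfl
    | some v =>
      cases v with
      | inl i =>
        have hi : (i.val + 1) ≤ n + 1 := by omega
        have := hshape (i.val + 1) hi
        have hval : Y (some (Sum.inl i)) = a (i.val + 1) := by
          simp [ha, av, eN, i.isLt]
        rw [hval, this]
        show _ = segY n q (p-1) (some (Sum.inl i))
        unfold segY
        congr 1
        simp only [eq_iff_iff]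
        omega
      | inr j =>
        have : segY n q (p-1) (some (Sum.inr j)) = 0 := rfl
        rw [this]
        fin_cases j
        · exact h0
        · exact h1
        · exact h2
        · exact h3
        · exact h4
  · -- B = 2
    have hmem := Bf_two c f0 f1 f2 f3 f4 (hnn none) (hnn _) (hnn _) (hnn _) (hnn _) (hnn _) hB
    have hsplit := LT36_split _ hmem
    have hA01 : Af n a = 0 ∨ Af n a = 1 := by omega
    rcases hA01 with hA | hA
    · -- A = 0 : D5 root
      have hzero := chain_zero n a hend hA
      have hc0 : c = 0 := by rw [← ha0]; exact hzero 0 (by omega)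
      rcases hsplit with ⟨h36, hmem20⟩ | ⟨h36, _⟩
      · right; left
        refine ⟨(f0, f1, f2, f3, f4), hmem20, ?_⟩
        funext x
        cases x with
        | none => rw [← hc, hc0]; rfl
        | some v =>
          cases v with
          | inl i =>
            have hval : Y (some (Sum.inl i)) = a (i.val + 1) := by
              simp [ha, av, eN, i.isLt]
            rw [hval, hzero (i.val+1) (by omega)]
            rfl
          | inr j =>
            have : ∀ j : Fin 5, fYv n (f0, f1, f2, f3, f4) (some (Sum.inr j)) = tup5 (f0, f1, f2, f3, f4) j := fun _ => rfl
            rw [this]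
            fin_cases j <;> rfl
      · exfalso
        simp only at h36
        omega
    · -- A = 1 : core case
      have hcodd : ¬ (c = 0) := by
        intro h
        rw [hA, ha0, h] at hpar
        obtain ⟨w, hw⟩ := hpar
        omega
      rcases hsplit with ⟨h36, _⟩ | ⟨h36, hmem16⟩
      · exact absurd h36 hcodd
      · right; right
        have hc1 : c = 1 := h36
        obtain ⟨k, hkn, hshape⟩ := chain_prefix n a hann hend (ha0.trans hc1) hA
        refine ⟨k, hkn, (f0, f1, f2, f3, f4), hmem16, ?_⟩
        funext x
        cases x with
        | none => rw [← hc, hc1]; rfl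
        | some v =>
          cases v with
          | inl i =>
            have := hshape (i.val + 1) (by omega)
            have hval : Y (some (Sum.inl i)) = a (i.val + 1) := by
              simp [ha, av, eN, i.isLt]
            rw [hval, this]
            show _ = coreY n k (f0, f1, f2, f3, f4) (some (Sum.inl i))
            unfold coreY
            congr 1
          | inr j =>
            have hco : ∀ j : Fin 5, coreY n k (f0, f1, f2, f3, f4) (some (Sum.inr j)) = tup5 (f0, f1, f2, f3, f4) j := fun _ => rfl
            rw [hco]
            fin_cases j <;> rfl

end S9

namespace S9

def F1 (n : ℕ) : Finset (Dn5V n → ℤ) :=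
  ((range n).sigma fun r => range (r+1)).image fun p => segY n p.2 p.1

def F2 (n : ℕ) : Finset (Dn5V n → ℤ) := LT20.toFinset.image (fYv n)

def F3 (n : ℕ) : Finset (Dn5V n → ℤ) :=
  ((range (n+1)) ×ˢ LT16.toFinset).image fun p => coreY n p.1 p.2

lemma segY_eval (n q r : ℕ) (i : Fin n) :
    segY n q r (some (Sum.inl i)) = if q ≤ i.val ∧ i.val ≤ r then 1 else 0 := rfl

lemma coreY_eval (n k : ℕ) (t : ℤ×ℤ×ℤ×ℤ×ℤ) (i : Fin n) :
    coreY n k t (some (Sum.inl i)) = if i.val < k then 1 else 0 := rfl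

lemma ite_ite_10 {C D : Prop} [Decidable C] [Decidable D]
    (h : (if C then (1:ℤ) else 0) = (if D then 1 else 0)) (hC : C) : D := by
  by_contra hD
  rw [if_pos hC, if_neg hD] at h
  norm_num at h

lemma ite_ite_01 {C D : Prop} [Decidable C] [Decidable D]
    (h : (if C then (1:ℤ) else 0) = (if D then 1 else 0)) (hD : D) : C := by
  by_contra hC
  rw [if_neg hC, if_pos hD] at h
  norm_num at h

lemma segY_inj (n q r q' r' : ℕ) (hqr : q ≤ r) (hr : r < n) (hq'r' : q' ≤ r') (hr' : r' < n)
    (h : segY n q r = segY n q' r') : q = q' ∧ r = r' := by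
  have e1 := congrFun h (some (Sum.inl ⟨q, by omega⟩))
  have e2 := congrFun h (some (Sum.inl ⟨q', by omega⟩))
  have e3 := congrFun h (some (Sum.inl ⟨r, by omega⟩))
  have e4 := congrFun h (some (Sum.inl ⟨r', by omega⟩))
  simp only [segY_eval] at e1 e2 e3 e4
  have c1 : q' ≤ q ∧ q ≤ r' := ite_ite_10 e1 ⟨le_refl q, hqr⟩
  have c2 : q ≤ q' ∧ q' ≤ r := ite_ite_01 e2 ⟨le_refl q', hq'r'⟩
  have c3 : q' ≤ r ∧ r ≤ r' := ite_ite_10 e3 ⟨hqr, le_refl r⟩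
  have c4 : q ≤ r' ∧ r' ≤ r := ite_ite_01 e4 ⟨hq'r', le_refl r'⟩
  exact ⟨by omega, by omega⟩

lemma tup5_inj (t t' : ℤ×ℤ×ℤ×ℤ×ℤ) (h : ∀ j : Fin 5, tup5 t j = tup5 t' j) : t = t' := by
  obtain ⟨a1,a2,a3,a4,a5⟩ := t
  obtain ⟨b1,b2,b3,b4,b5⟩ := t'
  have e0 : a1 = b1 := h 0
  have e1 : a2 = b2 := h 1
  have e2 : a3 = b3 := h 2
  have e3 : a4 = b4 := h 3
  have e4 : a5 = b5 := h 4
  simp [e0, e1, e2, e3, e4]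

lemma card_F1 (n : ℕ) : 2 * (F1 n).card = n * (n + 1) := by
  have hinj : Set.InjOn (fun p : (_ : ℕ) × ℕ => segY n p.2 p.1)
      ↑((range n).sigma fun r => range (r+1)) := by
    intro p hp p' hp' h
    have hp1 := Finset.mem_sigma.mp (Finset.mem_coe.mp hp)
    have hp2 := Finset.mem_sigma.mp (Finset.mem_coe.mp hp')
    rw [Finset.mem_range] at hp1 hp2
    obtain ⟨hr, hq⟩ := hp1
    obtain ⟨hr', hq'⟩ := hp2
    rw [Finset.mem_range] at hq hq'
    obtain ⟨h1, h2⟩ := segY_inj n p.2 p.1 p'.2 p'.1 (by omega) hr (by omega) hr' h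
    exact Sigma.ext h2 (heq_of_eq h1)
  rw [F1, Finset.card_image_of_injOn hinj, Finset.card_sigma]
  simp only [Finset.card_range]
  calc 2 * (∑ r ∈ range n, (r+1)) = (∑ i ∈ range (n+1), i) * 2 := by
        rw [Finset.sum_range_succ' (fun i => i) n]; ring
    _ = (n+1) * (n+1-1) := Finset.sum_range_id_mul_two (n+1)
    _ = n * (n+1) := by rw [Nat.add_sub_cancel, Nat.mul_comm]

lemma fYv_inj (n : ℕ) : Function.Injective (fYv n) := by
  intro t t' h
  exact tup5_inj t t' (fun j => congrFun h (some (Sum.inr j)))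

lemma card_F2 (n : ℕ) : (F2 n).card = 20 := by
  rw [F2, Finset.card_image_of_injective _ (fYv_inj n)]
  decide

lemma coreY_inj (n : ℕ) (k k' : ℕ) (t t' : ℤ×ℤ×ℤ×ℤ×ℤ) (hk : k ≤ n) (hk' : k' ≤ n)
    (h : coreY n k t = coreY n k' t') : k = k' ∧ t = t' := by
  constructor
  · by_contra hne
    rcases Nat.lt_or_ge k k' with hlt | hge
    · have e := congrFun h (some (Sum.inl ⟨k, by omega⟩))
      simp only [coreY_eval] at e
      rw [if_neg (by omega), if_pos (by exact hlt)] at e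
      norm_num at e
    · have hlt : k' < k := by omega
      have e := congrFun h (some (Sum.inl ⟨k', by omega⟩))
      simp only [coreY_eval] at e
      rw [if_pos (by exact hlt), if_neg (by omega)] at e
      norm_num at e
  · exact tup5_inj t t' (fun j => congrFun h (some (Sum.inr j)))

lemma card_F3 (n : ℕ) : (F3 n).card = 16 * (n + 1) := by
  have hinj : Set.InjOn (fun p : ℕ × (ℤ×ℤ×ℤ×ℤ×ℤ) => coreY n p.1 p.2)
      ↑((range (n+1)) ×ˢ LT16.toFinset) := by
    intro p hp p' hp' h
    have hp1 := Finset.mem_product.mp (Finset.mem_coe.mp hp)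
    have hp2 := Finset.mem_product.mp (Finset.mem_coe.mp hp')
    have hk1 := Finset.mem_range.mp hp1.1
    have hk2 := Finset.mem_range.mp hp2.1
    obtain ⟨h1, h2⟩ := coreY_inj n p.1 p'.1 p.2 p'.2 (by omega) (by omega) h
    exact Prod.ext h1 h2
  rw [F3, Finset.card_image_of_injOn hinj, Finset.card_product]
  rw [Finset.card_range]
  rw [show LT16.toFinset.card = 16 from by decide]
  ring

lemma LT20_nonneg : ∀ t ∈ LT20, ∀ j : Fin 5, 0 ≤ tup5 t j := by decide

lemma LT16_nonneg : ∀ t ∈ LT16, ∀ j : Fin 5, 0 ≤ tup5 t j := by decide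

lemma disj12 (n : ℕ) : Disjoint (F1 n) (F2 n) := by
  rw [Finset.disjoint_left]
  intro Y h1 h2
  rw [F1, Finset.mem_image] at h1
  rw [F2, Finset.mem_image] at h2
  obtain ⟨p, hp, hY1⟩ := h1
  obtain ⟨t, ht, hY2⟩ := h2
  simp only [Finset.mem_sigma, Finset.mem_range] at hp
  have := congrFun (hY1.trans hY2.symm) (some (Sum.inl ⟨p.2, by omega⟩))
  simp only [segY_eval] at this
  rw [if_pos ⟨le_refl _, by omega⟩] at this
  have h0 : fYv n t (some (Sum.inl ⟨p.2, by omega⟩)) = 0 := rfl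
  rw [h0] at this
  norm_num at this

lemma disj3 (n : ℕ) : Disjoint (F1 n ∪ F2 n) (F3 n) := by
  rw [Finset.disjoint_left]
  intro Y h12 h3
  rw [F3, Finset.mem_image] at h3
  obtain ⟨p, hp, hY3⟩ := h3
  have hY3n : Y none = 1 := by rw [← hY3]; rfl
  rcases Finset.mem_union.mp h12 with h | h
  · rw [F1, Finset.mem_image] at h
    obtain ⟨q, hq, hY1⟩ := h
    have : Y none = 0 := by rw [← hY1]; rfl
    omega
  · rw [F2, Finset.mem_image] at h
    obtain ⟨t, ht, hY2⟩ := h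
    have : Y none = 0 := by rw [← hY2]; rfl
    omega

lemma pos_eq (n : ℕ) :
    {Y : Dn5V n → ℤ | Y ≠ 0 ∧ (∀ i, 0 ≤ Y i) ∧ (Dn5Q n Y = -2 ∨ Dn5Q n Y = -3)}
      = ↑(F1 n ∪ F2 n ∪ F3 n) := by
  ext Y
  simp only [Set.mem_setOf_eq, Finset.coe_union, Set.mem_union, Finset.mem_coe]
  constructor
  · rintro ⟨hne, hnn, hQ⟩
    rcases classify n Y hnn hQ with ⟨q, r, hqr, hr, hY⟩ | ⟨t, ht, hY⟩ | ⟨k, hk, t, ht, hY⟩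
    · left; left
      rw [F1, Finset.mem_image]
      refine ⟨⟨r, q⟩, ?_, hY.symm⟩
      simp only [Finset.mem_sigma, Finset.mem_range]
      omega
    · left; right
      rw [F2, Finset.mem_image]
      exact ⟨t, List.mem_toFinset.mpr ht, hY.symm⟩
    · right
      rw [F3, Finset.mem_image]
      refine ⟨⟨k, t⟩, Finset.mem_product.mpr ⟨Finset.mem_range.mpr (by omega), List.mem_toFinset.mpr ht⟩, hY.symm⟩
  · intro h
    have hQ : Dn5Q n Y = -2 ∨ Dn5Q n Y = -3 := by
      rcases h with (h | h) | h
      · rw [F1, Finset.mem_image] at h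
        obtain ⟨p, hp, hY⟩ := h
        simp only [Finset.mem_sigma, Finset.mem_range] at hp
        left; rw [← hY]; exact segY_Q n p.2 p.1 (by omega) (by omega)
      · rw [F2, Finset.mem_image] at h
        obtain ⟨t, ht, hY⟩ := h
        left; rw [← hY]; exact fYv_Q n t (List.mem_toFinset.mp ht)
      · rw [F3, Finset.mem_image] at h
        obtain ⟨p, hp, hY⟩ := h
        rcases Finset.mem_product.mp hp with ⟨hk, ht⟩
        right; rw [← hY]
        exact coreY_Q n p.1 (by have := Finset.mem_range.mp hk; omega) p.2 (List.mem_toFinset.mp ht)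
    have hne : Y ≠ 0 := by
      intro hzero
      rw [hzero, Q_zero] at hQ
      omega
    have hnn : ∀ i, 0 ≤ Y i := by
      rcases h with (h | h) | h
      · rw [F1, Finset.mem_image] at h
        obtain ⟨p, hp, hY⟩ := h
        rw [← hY]
        intro i
        match i with
        | none => norm_num [segY]
        | some (Sum.inl i) => rw [segY_eval]; split <;> norm_num
        | some (Sum.inr j) => norm_num [segY]
      · rw [F2, Finset.mem_image] at h
        obtain ⟨t, ht, hY⟩ := h
        rw [← hY]
        intro i
        match i with
        | none => norm_num [fYv]
        | some (Sum.inl i) => norm_num [fYv]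
        | some (Sum.inr j) => exact LT20_nonneg t (List.mem_toFinset.mp ht) j
      · rw [F3, Finset.mem_image] at h
        obtain ⟨p, hp, hY⟩ := h
        rcases Finset.mem_product.mp hp with ⟨hk, ht⟩
        rw [← hY]
        intro i
        match i with
        | none => norm_num [coreY]
        | some (Sum.inl i) => rw [coreY_eval]; split <;> norm_num
        | some (Sum.inr j) => exact LT16_nonneg p.2 (List.mem_toFinset.mp ht) j
    exact ⟨hne, hnn, hQ⟩

lemma Q_neg (n : ℕ) (Y : Dn5V n → ℤ) : Dn5Q n (-Y) = Dn5Q n Y := by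
  unfold Dn5Q
  apply Finset.sum_congr rfl
  intro x _
  apply Finset.sum_congr rfl
  intro y _
  simp only [Pi.neg_apply]
  ring

end S9

theorem stmt_9 (n : ℕ) :
    {Y : Dn5V n → ℤ | Y ≠ 0 ∧ ((∀ i, 0 ≤ Y i) ∨ (∀ i, Y i ≤ 0)) ∧
      (Dn5Q n Y = -2 ∨ Dn5Q n Y = -3)}.ncard
    = n ^ 2 + 33 * n + 72 := by
  have hU : {Y : Dn5V n → ℤ | Y ≠ 0 ∧ ((∀ i, 0 ≤ Y i) ∨ (∀ i, Y i ≤ 0)) ∧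
      (Dn5Q n Y = -2 ∨ Dn5Q n Y = -3)}
      = {Y : Dn5V n → ℤ | Y ≠ 0 ∧ (∀ i, 0 ≤ Y i) ∧ (Dn5Q n Y = -2 ∨ Dn5Q n Y = -3)}
        ∪ {Y : Dn5V n → ℤ | Y ≠ 0 ∧ (∀ i, Y i ≤ 0) ∧ (Dn5Q n Y = -2 ∨ Dn5Q n Y = -3)} := by
    ext Y
    simp only [Set.mem_setOf_eq, Set.mem_union]
    tauto
  set Sp := {Y : Dn5V n → ℤ | Y ≠ 0 ∧ (∀ i, 0 ≤ Y i) ∧ (Dn5Q n Y = -2 ∨ Dn5Q n Y = -3)} with hSp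
  set Sn := {Y : Dn5V n → ℤ | Y ≠ 0 ∧ (∀ i, Y i ≤ 0) ∧ (Dn5Q n Y = -2 ∨ Dn5Q n Y = -3)} with hSn
  have hneg : Sn = (fun Y : Dn5V n → ℤ => -Y) '' Sp := by
    ext Y
    simp only [hSn, hSp, Set.mem_image, Set.mem_setOf_eq]
    constructor
    · rintro ⟨h1, h2, h3⟩
      refine ⟨-Y, ⟨?_, ?_, ?_⟩, by simp⟩
      · simpa using h1
      · intro i
        simpa using h2 i
      · rw [S9.Q_neg]; exact h3
    · rintro ⟨Z, ⟨h1, h2, h3⟩, rfl⟩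
      refine ⟨by simpa using h1, fun i => by simpa using (h2 i), by rw [S9.Q_neg]; exact h3⟩
  have hPosEq : Sp = ↑(S9.F1 n ∪ S9.F2 n ∪ S9.F3 n) := S9.pos_eq n
  have hfinp : Sp.Finite := by rw [hPosEq]; exact (S9.F1 n ∪ S9.F2 n ∪ S9.F3 n).finite_toSet
  have hfinn : Sn.Finite := by rw [hneg]; exact hfinp.image _
  have hdisj : Disjoint Sp Sn := by
    rw [Set.disjoint_left]
    rintro Y ⟨h1, h2, _⟩ ⟨h1', h2', _⟩
    apply h1
    funext i
    exact le_antisymm (h2' i) (h2 i)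
  rw [hU, Set.ncard_union_eq hdisj hfinp hfinn]
  have hcardn : Sn.ncard = Sp.ncard := by
    rw [hneg, Set.ncard_image_of_injective _ neg_injective]
  have hcardp : Sp.ncard = (S9.F1 n).card + (S9.F2 n).card + (S9.F3 n).card := by
    rw [hPosEq, Set.ncard_coe_finset]
    rw [Finset.card_union_of_disjoint (S9.disj3 n), Finset.card_union_of_disjoint (S9.disj12 n)]
  have key : 2 * (S9.F1 n).card = n^2 + n := (S9.card_F1 n).trans (by ring)
  rw [hcardn, hcardp, S9.card_F2 n, S9.card_F3 n]
  linarith [key]
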